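/- For λ > 0, a natural number P ≥ 1, and s > 0, the Laplace transform of the function g(t) = λt − P + e^{-λt}[ ∑_{i=0}^{P−1} P (λt)^i/i! − ∑_{i=0}^{P−1} i (λt)^i/i! ] equals (λ/(λ+s))^P · λ/s². -/

import Mathlib

open MeasureTheory Real Finset


-- integrability
lemma intble (n : ℕ) {a : ℝ} (ha : 0 < a) :
    IntegrableOn (fun t : ℝ => t ^ n * Real.exp (-(a * t))) (Set.Ioi 0) := by
  have h := integrableOn_rpow_mul_exp_neg_mul_rpow (p := 1) (s := n) (b := a)
    (neg_one_lt_zero.trans_le (Nat.cast_nonneg n)) zero_lt_one ha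
  simpa [Real.rpow_natCast, Real.rpow_one, neg_mul] using h

-- value
lemma intval (n : ℕ) {a : ℝ} (ha : 0 < a) :
    ∫ t in Set.Ioi (0:ℝ), t ^ n * Real.exp (-(a * t)) = (n.factorial : ℝ) / a ^ (n + 1) := by
  have h := Real.integral_rpow_mul_exp_neg_mul_Ioi (a := (n : ℝ) + 1) (r := a)
    (by positivity) ha
  have h2 : ∀ t : ℝ, t ^ ((n : ℝ) + 1 - 1) = t ^ n := by
    intro t
    rw [show (n : ℝ) + 1 - 1 = (n : ℝ) by ring, Real.rpow_natCast]
  simp only [h2] at h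
  rw [h, Real.Gamma_nat_eq_factorial]
  rw [show ((n:ℝ) + 1) = ((n + 1 : ℕ) : ℝ) by push_cast; ring, Real.rpow_natCast]
  rw [one_div, inv_pow]
  field_simp


lemma geomlem (lam s : ℝ) (hl : 0 < lam) (hs : 0 < s) (n : ℕ) :
    ∑ i ∈ Finset.range n, lam ^ i / (lam + s) ^ (i + 1) =
      (1 - (lam / (lam + s)) ^ n) / s := by
  have hls : lam + s ≠ 0 := by positivity
  have hs' : s ≠ 0 := ne_of_gt hs
  induction n with
  | zero => simp
  | succ n ih =>
      rw [Finset.sum_range_succ, ih, pow_succ, pow_succ, div_pow]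
      field_simp
      ring

lemma alg (lam s : ℝ) (hl : 0 < lam) (hs : 0 < s) (P : ℕ) :
    lam / s ^ 2 - (P : ℝ) / s +
      ∑ i ∈ Finset.range P, ((P : ℝ) - i) * lam ^ i / (lam + s) ^ (i + 1) =
      (lam / (lam + s)) ^ P * lam / s ^ 2 := by
  have hls : lam + s ≠ 0 := by positivity
  have hs' : s ≠ 0 := ne_of_gt hs
  induction P with
  | zero => simp
  | succ P ih =>
      have hsplit : ∑ i ∈ Finset.range (P + 1), ((P : ℝ) + 1 - i) * lam ^ i / (lam + s) ^ (i + 1)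
          = (∑ i ∈ Finset.range P, ((P : ℝ) - i) * lam ^ i / (lam + s) ^ (i + 1))
            + ∑ i ∈ Finset.range (P + 1), lam ^ i / (lam + s) ^ (i + 1) := by
        rw [show (∑ i ∈ Finset.range (P + 1), ((P : ℝ) + 1 - i) * lam ^ i / (lam + s) ^ (i + 1))
            = ∑ i ∈ Finset.range (P + 1), (((P : ℝ) - i) * lam ^ i / (lam + s) ^ (i + 1)
              + lam ^ i / (lam + s) ^ (i + 1)) from Finset.sum_congr rfl (fun i _ => by ring),
          Finset.sum_add_distrib, Finset.sum_range_succ (f := fun i =>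
            ((P : ℝ) - i) * lam ^ i / (lam + s) ^ (i + 1))]
        simp
      push_cast
      rw [hsplit, geomlem lam s hl hs (P + 1)]
      have h2 : ∑ i ∈ Finset.range P, ((P : ℝ) - i) * lam ^ i / (lam + s) ^ (i + 1)
          = (lam / (lam + s)) ^ P * lam / s ^ 2 - lam / s ^ 2 + (P : ℝ) / s := by
        linarith [ih]
      rw [h2, pow_succ, div_pow, pow_succ, div_pow]
      field_simp
      ring

theorem laplace_expected_backlog (lam s : ℝ) (hl : 0 < lam) (hs : 0 < s)
    (P : ℕ) (hP : 1 ≤ P) :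
    ∫ t in Set.Ioi (0:ℝ),
        Real.exp (-s * t) *
          (lam * t - (P : ℝ) +
            Real.exp (-lam * t) *
              ((∑ i ∈ Finset.range P, (P : ℝ) * (lam * t) ^ i / (Nat.factorial i : ℝ)) -
               (∑ i ∈ Finset.range P, (i : ℝ) * (lam * t) ^ i / (Nat.factorial i : ℝ)))) =
      (lam / (lam + s)) ^ P * lam / s ^ 2 := by
  have hls : 0 < lam + s := by positivity
  have key : ∀ t : ℝ,
      Real.exp (-s * t) *
          (lam * t - (P : ℝ) +
            Real.exp (-lam * t) *
              ((∑ i ∈ Finset.range P, (P : ℝ) * (lam * t) ^ i / (Nat.factorial i : ℝ)) -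
               (∑ i ∈ Finset.range P, (i : ℝ) * (lam * t) ^ i / (Nat.factorial i : ℝ))))
      = lam * (t ^ 1 * Real.exp (-(s * t))) - (P : ℝ) * (t ^ 0 * Real.exp (-(s * t)))
        + ∑ i ∈ Finset.range P,
            (((P : ℝ) - i) * lam ^ i / (Nat.factorial i : ℝ)) *
              (t ^ i * Real.exp (-((lam + s) * t))) := by
    intro t
    have he : Real.exp (-(s * t)) * Real.exp (-(lam * t)) = Real.exp (-((lam + s) * t)) := by
      rw [← Real.exp_add]; ring_nf
    have hsum : ∑ i ∈ Finset.range P,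
        (((P : ℝ) - i) * lam ^ i / (Nat.factorial i : ℝ)) *
          (t ^ i * Real.exp (-((lam + s) * t)))
        = Real.exp (-(s * t)) * (Real.exp (-(lam * t)) *
            ((∑ i ∈ Finset.range P, (P : ℝ) * (lam * t) ^ i / (Nat.factorial i : ℝ)) -
             (∑ i ∈ Finset.range P, (i : ℝ) * (lam * t) ^ i / (Nat.factorial i : ℝ)))) := by
      rw [← Finset.sum_sub_distrib, Finset.mul_sum, Finset.mul_sum]
      refine Finset.sum_congr rfl (fun i _ => ?_)
      rw [← he]
      ring
    rw [hsum]
    rw [show -s * t = -(s * t) by ring, show -lam * t = -(lam * t) by ring]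
    ring
  simp only [key]
  have IA : IntegrableOn (fun t : ℝ => lam * (t ^ 1 * Real.exp (-(s * t)))) (Set.Ioi 0) :=
    (intble 1 hs).const_mul lam
  have IB : IntegrableOn (fun t : ℝ => (P : ℝ) * (t ^ 0 * Real.exp (-(s * t)))) (Set.Ioi 0) :=
    (intble 0 hs).const_mul _
  have IC : ∀ i ∈ Finset.range P, IntegrableOn
      (fun t : ℝ => (((P : ℝ) - i) * lam ^ i / (Nat.factorial i : ℝ)) *
        (t ^ i * Real.exp (-((lam + s) * t)))) (Set.Ioi 0) :=
    fun i _ => (intble i hls).const_mul _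
  have IAB : IntegrableOn (fun t : ℝ => lam * (t ^ 1 * Real.exp (-(s * t)))
      - (P : ℝ) * (t ^ 0 * Real.exp (-(s * t)))) (Set.Ioi 0) := IA.sub IB
  rw [integral_add IAB (integrable_finset_sum _ IC),
    integral_sub IA IB, integral_finset_sum _ IC,
    integral_const_mul, integral_const_mul, intval 1 hs, intval 0 hs]
  have hterm : ∀ i ∈ Finset.range P,
      ∫ t in Set.Ioi (0:ℝ), (((P : ℝ) - i) * lam ^ i / (Nat.factorial i : ℝ)) *
        (t ^ i * Real.exp (-((lam + s) * t)))
      = ((P : ℝ) - i) * lam ^ i / (lam + s) ^ (i + 1) := by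
    intro i _
    rw [integral_const_mul, intval i hls]
    have hf : (Nat.factorial i : ℝ) ≠ 0 := Nat.cast_ne_zero.mpr i.factorial_ne_zero
    have hx : (lam + s) ^ (i + 1) ≠ 0 := by positivity
    field_simp
  rw [Finset.sum_congr rfl hterm]
  have : lam * ((Nat.factorial 1 : ℝ) / s ^ (1 + 1)) - (P : ℝ) * ((Nat.factorial 0 : ℝ) / s ^ (0 + 1))
      = lam / s ^ 2 - (P : ℝ) / s := by norm_num; ring
  rw [this, alg lam s hl hs P]
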